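/- arXiv:2203.16919 — 6 statements merged into one kernel-verified Lean document; each statement's English description precedes it below -/
import Mathlib

section
/- Let p ≥ 2 be an integer and define Q(x) = ((p+1) / (2 * cosh((p-1)x/2)^2))^(1/(p-1)) for x ∈ ℝ. Then Q is smooth, positive, and satisfies the ODE Q''(x) + Q(x)^p = Q(x) for all x ∈ ℝ. -/
theorem gkdv_ground_state (p : ℕ) (hp : 2 ≤ p) (Q : ℝ → ℝ)
    (hQ : Q = fun x : ℝ =>
      (((p : ℝ) + 1) / (2 * Real.cosh (((p : ℝ) - 1) * x / 2) ^ 2)) ^ ((1 : ℝ) / ((p : ℝ) - 1))) :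
    ContDiff ℝ (⊤ : ℕ∞) Q ∧ (∀ x, 0 < Q x) ∧ ∀ x, deriv (deriv Q) x + Q x ^ p = Q x := by
  have hp2 : (2:ℝ) ≤ (p:ℝ) := by exact_mod_cast hp
  set s : ℝ := (p:ℝ) - 1 with hs_def
  have hs1 : (1:ℝ) ≤ s := by rw [hs_def]; linarith
  have hs0 : (0:ℝ) < s := by linarith
  have hsne : s ≠ 0 := ne_of_gt hs0
  set b : ℝ := ((p:ℝ)+1)/2 with hb_def
  have hb0 : (0:ℝ) < b := by rw [hb_def]; linarith
  set K : ℝ := b ^ ((1:ℝ)/s) with hK_def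
  have hK0 : 0 < K := Real.rpow_pos_of_pos hb0 _
  set r : ℝ := -(2/s) with hr_def
  set g : ℝ → ℝ := fun x => Real.cosh (s * x / 2) with hg_def
  have hgpos : ∀ x, 0 < g x := fun x => Real.cosh_pos (s * x / 2)
  have hgne : ∀ x, g x ≠ 0 := fun x => ne_of_gt (hgpos x)
  -- rewrite Q
  have hQeq : Q = fun x => K * g x ^ r := by
    funext x
    rw [hQ]
    have hbase : ((p:ℝ)+1) / (2 * Real.cosh (((p:ℝ) - 1) * x / 2) ^ 2) = b / g x ^ 2 := by
      rw [hb_def, hg_def]; ring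
    show (((p:ℝ)+1) / (2 * Real.cosh (((p:ℝ) - 1) * x / 2) ^ 2)) ^ ((1:ℝ)/s) = K * g x ^ r
    rw [hbase, Real.div_rpow hb0.le (by positivity)]
    rw [← Real.rpow_natCast (g x) 2, ← Real.rpow_mul (hgpos x).le]
    have h2 : ((2:ℕ):ℝ) * ((1:ℝ)/s) = 2/s := by push_cast; ring
    rw [h2, div_eq_mul_inv, ← Real.rpow_neg (hgpos x).le, ← hr_def, hK_def]
  -- smoothness of g
  have hgsm : ContDiff ℝ (⊤ : ℕ∞) g := by
    rw [hg_def]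
    exact Real.contDiff_cosh.comp ((contDiff_const.mul contDiff_id).div_const 2)
  have hsmooth : ContDiff ℝ (⊤ : ℕ∞) Q := by
    rw [hQeq, contDiff_iff_contDiffAt]
    intro x
    exact contDiffAt_const.mul
      ((Real.contDiffAt_rpow_const_of_ne (hgne x)).comp x hgsm.contDiffAt)
  refine ⟨hsmooth, ?_, ?_⟩
  · intro x
    rw [hQeq]
    exact mul_pos hK0 (Real.rpow_pos_of_pos (hgpos x) _)
  -- derivatives
  have hlin : ∀ x : ℝ, HasDerivAt (fun y : ℝ => s * y / 2) (s/2) x := by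
    intro x
    have := ((hasDerivAt_id x).const_mul s).div_const 2
    simpa using this
  have hgd : ∀ x, HasDerivAt g (Real.sinh (s*x/2) * (s/2)) x := fun x =>
    (Real.hasDerivAt_cosh _).comp x (hlin x)
  have hQd : ∀ x, HasDerivAt Q (K * (r * g x ^ (r-1) * (Real.sinh (s*x/2) * (s/2)))) x := by
    intro x
    rw [hQeq]
    exact ((Real.hasDerivAt_rpow_const (Or.inl (hgne x))).comp x (hgd x)).const_mul K
  have hderivQ : deriv Q = fun x => (K * r * (s/2)) * (g x ^ (r-1) * Real.sinh (s*x/2)) := by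
    funext x
    rw [(hQd x).deriv]; ring
  have hsd : ∀ x, HasDerivAt (fun y => Real.sinh (s*y/2)) (g x * (s/2)) x := fun x =>
    (Real.hasDerivAt_sinh _).comp x (hlin x)
  have hpowd : ∀ x, HasDerivAt (fun y => g y ^ (r-1))
      ((r-1) * g x ^ (r-1-1) * (Real.sinh (s*x/2) * (s/2))) x := fun x =>
    ((Real.hasDerivAt_rpow_const (Or.inl (hgne x))).comp x (hgd x))
  have hQdd : ∀ x, deriv (deriv Q) x = (K*r*(s/2)) *
      (((r-1) * g x ^ (r-1-1) * (Real.sinh (s*x/2) * (s/2))) * Real.sinh (s*x/2)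
        + g x ^ (r-1) * (g x * (s/2))) := by
    intro x
    rw [hderivQ]
    exact (((hpowd x).mul (hsd x)).const_mul (K*r*(s/2))).deriv
  intro x
  set G : ℝ := g x with hG_def
  set S : ℝ := Real.sinh (s*x/2) with hS_def
  have hG0 : 0 < G := hgpos x
  have hps : (p:ℝ) = s + 1 := by rw [hs_def]; ring
  -- rpow facts
  have hDG : G ^ (r-1) * G = G ^ r := by
    have h := (Real.rpow_add hG0 (r-1) 1).symm
    rw [Real.rpow_one] at h
    rw [h]
    congr 1
    ring
  have hBG : G ^ (r-1-1) * G ^ 2 = G ^ r := by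
    have h2 : (G:ℝ) ^ (2:ℕ) = G ^ ((2:ℕ):ℝ) := (Real.rpow_natCast G 2).symm
    rw [h2, ← Real.rpow_add hG0]
    congr 1
    push_cast
    ring
  have hBS : G ^ (r-1-1) * S ^ 2 = G ^ r - G ^ (r-1-1) := by
    rw [hS_def, Real.sinh_sq]
    rw [mul_sub, mul_one, hBG]
  have hKp : K ^ p = b * K := by
    rw [hK_def, ← Real.rpow_natCast (b ^ ((1:ℝ)/s)) p, ← Real.rpow_mul hb0.le]
    have : (1:ℝ)/s * (p:ℝ) = 1 + 1/s := by
      rw [hps]; field_simp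
    rw [this, Real.rpow_add hb0, Real.rpow_one]
  have hQp : Q x ^ p = b * K * G ^ (r-1-1) := by
    rw [hQeq]
    show (K * G ^ r) ^ p = b * K * G ^ (r-1-1)
    rw [mul_pow, hKp, ← Real.rpow_natCast (G ^ r) p, ← Real.rpow_mul hG0.le]
    have : r * (p:ℝ) = r - 1 - 1 := by
      rw [hr_def, hps]; field_simp; ring
    rw [this]
  rw [hQdd x, hQp, hQeq]
  show (K*r*(s/2)) * (((r-1) * G ^ (r-1-1) * (S * (s/2))) * S + G ^ (r-1) * (G * (s/2)))
      + b * K * G ^ (r-1-1) = K * G ^ r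
  have h1 : ((r-1) * G ^ (r-1-1) * (S * (s/2))) * S = (r-1)*(s/2)*(G ^ r - G ^ (r-1-1)) := by
    linear_combination ((r-1)*(s/2)) * hBS
  have h2 : G ^ (r-1) * (G * (s/2)) = (s/2) * G ^ r := by
    linear_combination (s/2) * hDG
  rw [h1, h2, hr_def, hb_def, hps]
  field_simp
  ring
end

section
/- Let η, κ₁, κ₂ > 0 and let φ : ℝ → ℝ be C³ satisfying: lim_{x→-∞} φ(x) = 0; 0 ≤ φ'(x) ≤ κ₁·exp(√η·x); and |φ'''(x)| ≤ κ₂·φ'(x) for all x. Then φ''(x) → 0 as x → -∞ and |φ''(x)| ≤ κ₂·φ(x) for all x ∈ ℝ. -/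
/-!
Put `p = φ'` and `q = φ''`. Since `|q'| ≤ κ₂ p = (κ₂ φ)'`, both `κ₂ φ - q` and `κ₂ φ + q` are
monotone, so `|q x - q y| ≤ κ₂ (φ x - φ y)` for `y ≤ x`. The exponential bound forces `p → 0` at
`-∞`, and the mean value theorem on `[x - 1, x]` then produces points `c → -∞` with `q c → 0`.
Letting `y = c → -∞` gives `|q x| ≤ κ₂ φ x`, which in turn squeezes `q` to `0`.
-/

open Filter Topology Real

lemma abs_sub_le_sub_of_abs_deriv_le_deriv {f g : ℝ → ℝ} (hf : Differentiable ℝ f)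
    (hg : Differentiable ℝ g) (hfg : ∀ x, |deriv f x| ≤ deriv g x) {x y : ℝ} (hyx : y ≤ x) :
    |f x - f y| ≤ g x - g y := by
  have hsub : Monotone (g - f) := monotone_of_deriv_nonneg (hg.sub hf) fun z => by
    rw [deriv_sub (hg z) (hf z)]
    linarith [le_abs_self (deriv f z), hfg z]
  have hadd : Monotone (g + f) := monotone_of_deriv_nonneg (hg.add hf) fun z => by
    rw [deriv_add (hg z) (hf z)]
    linarith [neg_abs_le (deriv f z), hfg z]
  have h₁ := hsub hyx
  have h₂ := hadd hyx
  simp only [Pi.sub_apply, Pi.add_apply] at h₁ h₂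
  rw [abs_sub_le_iff]
  constructor <;> linarith

lemma tendsto_atBot_zero_of_le_mul_exp {f : ℝ → ℝ} {C a : ℝ} (ha : 0 < a)
    (hf₀ : ∀ x, 0 ≤ f x) (hf : ∀ x, f x ≤ C * exp (a * x)) : Tendsto f atBot (𝓝 0) := by
  have hexp : Tendsto (fun x => C * exp (a * x)) atBot (𝓝 0) := by
    simpa using (tendsto_exp_atBot.comp (tendsto_id.const_mul_atBot ha)).const_mul C
  exact tendsto_of_tendsto_of_tendsto_of_le_of_le tendsto_const_nhds hexp hf₀ hf

lemma exists_tendsto_deriv_comp_of_tendsto_atBot {f : ℝ → ℝ} (hf : Differentiable ℝ f) {a : ℝ}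
    (hlim : Tendsto f atBot (𝓝 a)) :
    ∃ c : ℝ → ℝ, Tendsto c atBot atBot ∧ Tendsto (deriv f ∘ c) atBot (𝓝 0) := by
  have hmvt (x : ℝ) : ∃ c ∈ Set.Ioo (x - 1) x, deriv f c = f x - f (x - 1) := by
    simpa using exists_deriv_eq_slope f (sub_one_lt x) hf.continuous.continuousOn
      hf.differentiableOn
  choose c hc hfc using hmvt
  refine ⟨c, tendsto_atBot_mono (fun x => (hc x).2.le) tendsto_id, ?_⟩
  have hshift : Tendsto (fun x : ℝ => x - 1) atBot atBot := tendsto_atBot_add_const_right _ _ tendsto_id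
  simpa [Function.comp_def, hfc] using hlim.sub (hlim.comp hshift)

lemma abs_le_of_abs_deriv_le_deriv {f g : ℝ → ℝ} (hf : Differentiable ℝ f)
    (hg : Differentiable ℝ g) (hfg : ∀ x, |deriv f x| ≤ deriv g x)
    (hg₀ : Tendsto g atBot (𝓝 0)) {c : ℝ → ℝ} (hc : Tendsto c atBot atBot)
    (hfc : Tendsto (f ∘ c) atBot (𝓝 0)) (x : ℝ) : |f x| ≤ g x := by
  have hrhs : Tendsto (fun y => g x - g (c y) + |f (c y)|) atBot (𝓝 (g x)) := by
    simpa using (tendsto_const_nhds.sub (hg₀.comp hc)).add hfc.abs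
  refine ge_of_tendsto hrhs ?_
  filter_upwards [hc.eventually (eventually_le_atBot x)] with y hy
  calc |f x| = |(f x - f (c y)) + f (c y)| := by rw [sub_add_cancel]
    _ ≤ |f x - f (c y)| + |f (c y)| := abs_add_le _ _
    _ ≤ g x - g (c y) + |f (c y)| := by
      gcongr
      exact abs_sub_le_sub_of_abs_deriv_le_deriv hf hg hfg hy

theorem weight_second_derivative_transfer_general (η κ₁ κ₂ : ℝ) (hη : 0 < η)
    (φ : ℝ → ℝ) (hC3 : ContDiff ℝ 3 φ)
    (hlim : Filter.Tendsto φ Filter.atBot (nhds 0))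
    (hderiv : ∀ x : ℝ, 0 ≤ deriv φ x ∧ deriv φ x ≤ κ₁ * Real.exp (Real.sqrt η * x))
    (hthird : ∀ x : ℝ, |iteratedDeriv 3 φ x| ≤ κ₂ * deriv φ x) :
    Filter.Tendsto (deriv (deriv φ)) Filter.atBot (nhds 0) ∧
      ∀ x : ℝ, |deriv (deriv φ) x| ≤ κ₂ * φ x := by
  have hφ : Differentiable ℝ φ := hC3.differentiable (by norm_num)
  have hp : Differentiable ℝ (deriv φ) := by
    simpa using hC3.differentiable_iteratedDeriv 1 (by norm_num)
  have hq : Differentiable ℝ (deriv (deriv φ)) := by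
    simpa [iteratedDeriv_eq_iterate] using hC3.differentiable_iteratedDeriv 2 (by norm_num)
  have hp₀ : Tendsto (deriv φ) atBot (𝓝 0) := tendsto_atBot_zero_of_le_mul_exp
    (sqrt_pos.mpr hη) (fun x => (hderiv x).1) (fun x => (hderiv x).2)
  obtain ⟨c, hc, hqc⟩ := exists_tendsto_deriv_comp_of_tendsto_atBot hp hp₀
  have hκφ : Tendsto (fun x => κ₂ * φ x) atBot (𝓝 0) := by simpa using hlim.const_mul κ₂
  have hbound : ∀ x, |deriv (deriv φ) x| ≤ κ₂ * φ x :=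
    abs_le_of_abs_deriv_le_deriv hq (hφ.const_mul κ₂)
      (fun x => by simpa [deriv_const_mul _ (hφ x), iteratedDeriv_eq_iterate] using hthird x)
      hκφ hc hqc
  refine ⟨?_, hbound⟩
  exact tendsto_of_tendsto_of_tendsto_of_le_of_le (by simpa using hκφ.neg) hκφ
    (fun x => neg_le_of_abs_le (hbound x)) (fun x => le_of_abs_le (hbound x))

theorem weight_second_derivative_transfer (η κ₁ κ₂ : ℝ) (hη : 0 < η) (hκ₁ : 0 < κ₁) (hκ₂ : 0 < κ₂)
    (φ : ℝ → ℝ) (hC3 : ContDiff ℝ 3 φ)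
    (hlim : Filter.Tendsto φ Filter.atBot (nhds 0))
    (hderiv : ∀ x : ℝ, 0 ≤ deriv φ x ∧ deriv φ x ≤ κ₁ * Real.exp (Real.sqrt η * x))
    (hthird : ∀ x : ℝ, |iteratedDeriv 3 φ x| ≤ κ₂ * deriv φ x) :
    Filter.Tendsto (deriv (deriv φ)) Filter.atBot (nhds 0) ∧
      ∀ x : ℝ, |deriv (deriv φ) x| ≤ κ₂ * φ x :=
  weight_second_derivative_transfer_general η κ₁ κ₂ hη φ hC3 hlim hderiv hthird
end

section
/- Fix η > 0, define φ_[0](x) = (2/π)·arctan(exp(√η·x)), and for n ≥ 1 define φ_[n](x) = ∫_{-∞}^x φ_[n-1](y) dy. Then for all n ∈ ℕ: (a) for all x ≤ 0, 0 ≤ φ_[n](x) ≤ η^(-n/2)·exp(√η·x); and (b) for all x ≥ 0, (1/2)·x^n/n! ≤ φ_[n](x) ≤ Σ_{k=0}^n η^(-(n-k)/2)·x^k/k!. -/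
/-!
Induction on `n`, with `s = √η`. The weight `φ 0` is monotone, lies between `0` and
`min 1 (exp (s * x))` (as `arctan t ≤ t`), and is at least `1 / 2` on `[0, ∞)`
(as `arctan 1 = π / 4`). These bounds pass to `φ (n + 1)`: integrating `C * exp (s * y)` over
`(-∞, x]` gives `C / s * exp (s * x)`, and for `x ≥ 0` one splits `∫_{-∞}^x = ∫_{-∞}^0 + ∫_0^x`,
bounding the first part by `s⁻¹ ^ (n + 1)` and integrating the polynomial bounds termwise.
Every `φ n` is monotone, which makes it locally integrable.
-/

open MeasureTheory Set Real

lemma Real.arctan_le_self {t : ℝ} (ht : 0 ≤ t) : arctan t ≤ t := by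
  simpa only [tan_arctan] using le_tan (arctan_nonneg.2 ht) (arctan_lt_pi_div_two t)

section IntegralIic

variable {f : ℝ → ℝ} {C s x : ℝ}

lemma integrableOn_Iic_of_monotone_of_le_exp (hs : 0 < s) (hf : Monotone f) (hf₀ : 0 ≤ f)
    (hexp : ∀ y ≤ 0, f y ≤ C * exp (s * y)) (x : ℝ) : IntegrableOn f (Iic x) := by
  have hIic : ∀ x ≤ 0, IntegrableOn f (Iic x) := fun x hx =>
    ((integrableOn_exp_mul_Iic hs x).const_mul C).mono' hf.measurable.aestronglyMeasurable.restrict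
      (ae_restrict_of_forall_mem measurableSet_Iic fun y hy => by
        simpa only [norm_of_nonneg (hf₀ y)] using hexp y (hy.trans hx))
  rcases le_total x 0 with hx | hx
  · exact hIic x hx
  · rw [← Iic_union_Ioc_eq_Iic hx]
    exact (hIic 0 le_rfl).union (hf.intervalIntegrable (a := 0) (b := x)).1

lemma monotone_integral_Iic (hf₀ : 0 ≤ f) (hf : ∀ x, IntegrableOn f (Iic x)) :
    Monotone fun x => ∫ y in Iic x, f y := fun _ b hab =>
  setIntegral_mono_set (hf b) (.of_forall hf₀) (Iic_subset_Iic.2 hab).eventuallyLE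

lemma integral_Iic_le_exp (hs : 0 < s) (hf : IntegrableOn f (Iic x))
    (hexp : ∀ y ≤ x, f y ≤ C * exp (s * y)) :
    ∫ y in Iic x, f y ≤ C / s * exp (s * x) := by
  calc ∫ y in Iic x, f y ≤ ∫ y in Iic x, C * exp (s * y) :=
        setIntegral_mono_on hf ((integrableOn_exp_mul_Iic hs x).const_mul C) measurableSet_Iic hexp
    _ = C / s * exp (s * x) := by rw [integral_const_mul, integral_exp_mul_Iic hs]; ring

lemma integral_Iic_eq_integral_Iic_zero_add (hf : ∀ x, IntegrableOn f (Iic x)) (x : ℝ) :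
    ∫ y in Iic x, f y = (∫ y in Iic 0, f y) + ∫ y in 0..x, f y :=
  eq_add_of_sub_eq' (intervalIntegral.integral_Iic_sub_Iic (hf 0) (hf x))

end IntegralIic

section

open scoped Nat

lemma integral_pow_div_factorial (x : ℝ) (k : ℕ) :
    ∫ y in (0 : ℝ)..x, y ^ k / k ! = x ^ (k + 1) / (k + 1)! := by
  simp only [div_eq_mul_inv, intervalIntegral.integral_mul_const, integral_pow]
  push_cast [Nat.factorial_succ]
  field_simp
  ring

/-- `c ^ n * ∑_{k ≤ n} (x / c) ^ k / k!`, the degree `n` Taylor polynomial of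
`c ^ n * exp (x / c)`. -/
noncomputable def truncExpSum (c : ℝ) (n : ℕ) (x : ℝ) : ℝ :=
  ∑ k ∈ Finset.range (n + 1), c ^ (n - k) * x ^ k / k !

lemma continuous_truncExpSum (c : ℝ) (n : ℕ) : Continuous (truncExpSum c n) := by
  unfold truncExpSum; fun_prop

lemma truncExpSum_succ (c : ℝ) (n : ℕ) (x : ℝ) :
    truncExpSum c (n + 1) x = c ^ (n + 1) + ∫ y in (0 : ℝ)..x, truncExpSum c n y := by
  unfold truncExpSum
  rw [intervalIntegral.integral_finsetSum fun k _ => by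
      apply Continuous.intervalIntegrable; fun_prop, Finset.sum_range_succ']
  simp only [mul_div_assoc, intervalIntegral.integral_const_mul, integral_pow_div_factorial]
  simp only [Nat.reduceSubDiff, tsub_zero, pow_zero, Nat.factorial_zero, Nat.cast_one,
    div_one, mul_one]
  ring

noncomputable def arctanWeight (s x : ℝ) : ℝ := 2 / π * arctan (exp (s * x))

section ArctanWeight

variable {s x : ℝ}

lemma monotone_arctanWeight (hs : 0 ≤ s) : Monotone (arctanWeight s) := fun _ _ hxy =>
  mul_le_mul_of_nonneg_left (arctan_strictMono.monotone (exp_le_exp.2 (by gcongr)))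
    (by positivity)

lemma arctanWeight_nonneg (s x : ℝ) : 0 ≤ arctanWeight s x :=
  mul_nonneg (by positivity) (arctan_nonneg.2 (exp_pos _).le)

lemma arctanWeight_le_exp (s x : ℝ) : arctanWeight s x ≤ exp (s * x) := by
  have h2π : 2 / π ≤ 1 := by rw [div_le_one pi_pos]; linarith [pi_gt_three]
  calc arctanWeight s x ≤ 1 * exp (s * x) := by
        unfold arctanWeight
        gcongr
        exact arctan_le_self (exp_pos _).le
    _ = exp (s * x) := one_mul _

lemma arctanWeight_le_one (s x : ℝ) : arctanWeight s x ≤ 1 := by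
  calc arctanWeight s x ≤ 2 / π * (π / 2) := by
        unfold arctanWeight; gcongr; exact (arctan_lt_pi_div_two _).le
    _ = 1 := by field_simp

lemma one_half_le_arctanWeight (hs : 0 ≤ s) (hx : 0 ≤ x) : 1 / 2 ≤ arctanWeight s x := by
  calc (1 : ℝ) / 2 = 2 / π * arctan 1 := by rw [arctan_one]; field_simp; norm_num
    _ ≤ arctanWeight s x := by
        unfold arctanWeight; gcongr; exact one_le_exp (by positivity)

end ArctanWeight

structure AntiderivativeBounds (s : ℝ) (n : ℕ) (f : ℝ → ℝ) : Prop where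
  monotone : Monotone f
  nonneg : 0 ≤ f
  le_exp : ∀ x ≤ 0, f x ≤ s⁻¹ ^ n * exp (s * x)
  half_pow_div_factorial_le : ∀ x, 0 ≤ x → 1 / 2 * x ^ n / n ! ≤ f x
  le_truncExpSum : ∀ x, 0 ≤ x → f x ≤ truncExpSum s⁻¹ n x

namespace AntiderivativeBounds

variable {s : ℝ} {n : ℕ} {f : ℝ → ℝ}

lemma arctanWeight (hs : 0 ≤ s) : AntiderivativeBounds s 0 (arctanWeight s) where
  monotone := monotone_arctanWeight hs
  nonneg := arctanWeight_nonneg s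
  le_exp x _ := by simpa using arctanWeight_le_exp s x
  half_pow_div_factorial_le x hx := by simpa using one_half_le_arctanWeight hs hx
  le_truncExpSum x _ := by simpa [truncExpSum] using arctanWeight_le_one s x

lemma integral_Iic (hs : 0 < s) (hf : AntiderivativeBounds s n f) :
    AntiderivativeBounds s (n + 1) fun x => ∫ y in Iic x, f y := by
  have hint := integrableOn_Iic_of_monotone_of_le_exp hs hf.monotone hf.nonneg hf.le_exp
  have hexp : ∀ x ≤ 0, ∫ y in Iic x, f y ≤ s⁻¹ ^ (n + 1) * exp (s * x) := fun x hx => by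
    simpa only [div_eq_mul_inv, pow_succ, mul_right_comm] using
      integral_Iic_le_exp hs (hint x) fun y hy => hf.le_exp y (hy.trans hx)
  have hsplit := integral_Iic_eq_integral_Iic_zero_add hint
  have hnonneg : ∀ x, 0 ≤ ∫ y in Iic x, f y := fun x =>
    setIntegral_nonneg measurableSet_Iic fun y _ => hf.nonneg y
  refine ⟨monotone_integral_Iic hf.nonneg hint, hnonneg, hexp, fun x hx => ?_, fun x hx => ?_⟩
  · calc 1 / 2 * x ^ (n + 1) / (n + 1)! = ∫ y in (0 : ℝ)..x, 1 / 2 * y ^ n / n ! := by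
          simp only [mul_div_assoc, intervalIntegral.integral_const_mul, integral_pow_div_factorial]
      _ ≤ ∫ y in (0 : ℝ)..x, f y := intervalIntegral.integral_mono_on hx
          (by apply Continuous.intervalIntegrable; fun_prop) hf.monotone.intervalIntegrable
          fun y hy => hf.half_pow_div_factorial_le y hy.1
      _ ≤ ∫ y in Iic x, f y := by rw [hsplit]; exact le_add_of_nonneg_left (hnonneg 0)
  · calc ∫ y in Iic x, f y = (∫ y in Iic 0, f y) + ∫ y in (0 : ℝ)..x, f y := hsplit x
      _ ≤ s⁻¹ ^ (n + 1) + ∫ y in (0 : ℝ)..x, truncExpSum s⁻¹ n y := by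
          gcongr
          · simpa using hexp 0 le_rfl
          · exact intervalIntegral.integral_mono_on hx hf.monotone.intervalIntegrable
              ((continuous_truncExpSum _ _).intervalIntegrable _ _)
              fun y hy => hf.le_truncExpSum y hy.1
      _ = truncExpSum s⁻¹ (n + 1) x := (truncExpSum_succ _ _ _).symm

end AntiderivativeBounds

end

theorem iterated_antiderivative_growth (η : ℝ) (hη : 0 < η) (φ : ℕ → ℝ → ℝ)
    (h0 : φ 0 = fun x : ℝ => (2 / Real.pi) * Real.arctan (Real.exp (Real.sqrt η * x)))
    (hrec : ∀ n : ℕ, ∀ x : ℝ, φ (n + 1) x = ∫ y in Set.Iic x, φ n y) :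
    ∀ n : ℕ,
      (∀ x : ℝ, x ≤ 0 → 0 ≤ φ n x ∧ φ n x ≤ (Real.sqrt η)⁻¹ ^ n * Real.exp (Real.sqrt η * x)) ∧
      (∀ x : ℝ, 0 ≤ x →
        (1 / 2) * x ^ n / ((Nat.factorial n : ℕ) : ℝ) ≤ φ n x ∧
        φ n x ≤ ∑ k ∈ Finset.range (n + 1), (Real.sqrt η)⁻¹ ^ (n - k) * x ^ k / ((Nat.factorial k : ℕ) : ℝ)) := by
  have hs : 0 < √η := sqrt_pos.2 hη
  have hφ : ∀ n, AntiderivativeBounds √η n (φ n) := by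
    intro n
    induction n with
    | zero => exact h0 ▸ AntiderivativeBounds.arctanWeight hs.le
    | succ n ih => exact funext (hrec n) ▸ ih.integral_Iic hs
  exact fun n => ⟨fun x hx => ⟨(hφ n).nonneg x, (hφ n).le_exp x hx⟩,
    fun x hx => ⟨(hφ n).half_pow_div_factorial_le x hx, (hφ n).le_truncExpSum x hx⟩⟩
end

section
/- Let p ≥ 2, C ≥ 1, and let (b_s)_{s∈ℕ} be a sequence of reals with b_s ≥ 1 for all s, b_0, b_1 given, satisfying b_{s+2} ≤ C·p^s·b_s^p for all s ≥ 1. Then for every μ > √p there exists s₀ ∈ ℕ such that for all s ≥ s₀, b_s ≤ 2^(μ^s). -/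
theorem sobolev_norm_growth_recurrence (p : ℕ) (hp : 2 ≤ p) (C : ℝ) (hC : 1 ≤ C)
    (b : ℕ → ℝ) (hb : ∀ s, 1 ≤ b s)
    (hrec : ∀ s : ℕ, 1 ≤ s → b (s + 2) ≤ C * (p : ℝ) ^ s * b s ^ p) :
    ∀ μ : ℝ, Real.sqrt p < μ → ∃ s₀ : ℕ, ∀ s : ℕ, s₀ ≤ s → b s ≤ (2 : ℝ) ^ (μ ^ s) := by
  intro μ hμ
  set q : ℝ := (p : ℝ) with hqdef
  clear_value q
  have hq2 : (2 : ℝ) ≤ q := by simp only [hqdef]; exact_mod_cast hp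
  have hq0 : 0 < q := by linarith
  have hsq : Real.sqrt q ^ 2 = q := Real.sq_sqrt (by linarith)
  have hsq1 : 1 < Real.sqrt q := by
    nlinarith [Real.sqrt_nonneg q]
  set ν : ℝ := (Real.sqrt q + μ) / 2 with hνdef
  clear_value ν
  have hν1 : 1 < ν := by
    have : Real.sqrt q < ν := by simp only [hνdef]; linarith
    linarith
  have hνμ : ν < μ := by simp only [hνdef]; linarith
  have hνsqrt : Real.sqrt q < ν := by simp only [hνdef]; linarith
  have hνq : q < ν ^ 2 := by nlinarith [Real.sqrt_nonneg q]
  have hν0 : 0 < ν := by linarith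
  -- logs
  set a : ℕ → ℝ := fun s => Real.logb 2 (b s) with hadef
  have hb0 : ∀ s, 0 < b s := fun s => lt_of_lt_of_le one_pos (hb s)
  have ha0 : ∀ s, 0 ≤ a s := fun s => Real.logb_nonneg one_lt_two (hb s)
  clear_value a
  have hlogC : 0 ≤ Real.logb 2 C := Real.logb_nonneg one_lt_two hC
  have hlogq : 0 ≤ Real.logb 2 q := Real.logb_nonneg one_lt_two (by linarith)
  set L : ℝ := Real.logb 2 C + Real.logb 2 q / (ν - 1) with hLdef
  clear_value L
  have hL0 : 0 ≤ L := by
    have : 0 ≤ Real.logb 2 q / (ν - 1) := div_nonneg hlogq (by linarith)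
    simp only [hLdef]; linarith
  set A : ℝ := max (max (a 0) (max (a 1) (a 2))) (L / (ν ^ 2 - q)) with hAdef
  have hA0 : 0 ≤ A := le_trans (ha0 0) (le_trans (le_max_left _ _) (le_max_left _ _))
  have hAa0 : a 0 ≤ A := le_trans (le_max_left _ _) (le_max_left _ _)
  have hAa1 : a 1 ≤ A := le_trans (le_trans (le_max_left _ _) (le_max_right _ _)) (le_max_left _ _)
  have hAa2 : a 2 ≤ A := le_trans (le_trans (le_max_right _ _) (le_max_right _ _)) (le_max_left _ _)
  have hAL : L ≤ A * (ν ^ 2 - q) := by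
    have h1 : L / (ν ^ 2 - q) ≤ A := le_max_right _ _
    have h2 : 0 < ν ^ 2 - q := by linarith
    calc L = L / (ν ^ 2 - q) * (ν ^ 2 - q) := by field_simp
    _ ≤ A * (ν ^ 2 - q) := by nlinarith
  clear_value A
  -- log recurrence
  have hstep : ∀ s : ℕ, 1 ≤ s → a (s + 2) ≤ Real.logb 2 C + s * Real.logb 2 q + q * a s := by
    intro s hs
    have h1 : a (s + 2) ≤ Real.logb 2 (C * q ^ s * b s ^ p) := by
      rw [hadef]
      exact Real.logb_le_logb_of_le one_lt_two (hb0 (s+2)) (hrec s hs)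
    have h2 : Real.logb 2 (C * q ^ s * b s ^ p)
        = Real.logb 2 C + s * Real.logb 2 q + (p : ℝ) * a s := by
      have hC0 : C ≠ 0 := by linarith
      have hqs : q ^ s ≠ 0 := by positivity
      have hbs : b s ^ p ≠ 0 := by
        have := hb0 s; positivity
      rw [Real.logb_mul (mul_ne_zero hC0 hqs) hbs,
        Real.logb_mul hC0 hqs, Real.logb_pow, Real.logb_pow, hadef]
    rw [h2] at h1
    have h3 : (p : ℝ) * a s = q * a s := by rw [hqdef]
    linarith [h1, h3.le]
  -- Bernoulli-type bound used in the induction step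
  have hbern : ∀ t : ℕ, Real.logb 2 C + (t : ℝ) * Real.logb 2 q ≤ ν ^ t * L := by
    intro t
    have hb1 : 1 + (t : ℝ) * (ν - 1) ≤ ν ^ t := by
      have := one_add_mul_le_pow (a := ν - 1) (by linarith) t
      simpa using this
    have hν1' : (0 : ℝ) < ν - 1 := by linarith
    have hpow1 : (1 : ℝ) ≤ ν ^ t := one_le_pow₀ (le_of_lt hν1)
    have ht2 : (t : ℝ) * (ν - 1) ≤ ν ^ t := by nlinarith [Nat.cast_nonneg (α := ℝ) t]
    have ht3 : (t : ℝ) * Real.logb 2 q ≤ ν ^ t * (Real.logb 2 q / (ν - 1)) := by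
      rw [mul_div_assoc', le_div_iff₀ hν1']
      calc (t : ℝ) * Real.logb 2 q * (ν - 1) = ((t : ℝ) * (ν - 1)) * Real.logb 2 q := by ring
      _ ≤ ν ^ t * Real.logb 2 q := mul_le_mul_of_nonneg_right ht2 hlogq
    have ht4 : Real.logb 2 C ≤ ν ^ t * Real.logb 2 C := by
      calc Real.logb 2 C = 1 * Real.logb 2 C := (one_mul _).symm
      _ ≤ ν ^ t * Real.logb 2 C := mul_le_mul_of_nonneg_right hpow1 hlogC
    have ht5 : ν ^ t * L = ν ^ t * Real.logb 2 C + ν ^ t * (Real.logb 2 q / (ν - 1)) := by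
      simp only [hLdef]; ring
    linarith
  -- key claim
  have hstep2 : ∀ s : ℕ, 1 ≤ s → a s ≤ A * ν ^ s → a (s + 2) ≤ A * ν ^ (s + 2) := by
    intro s hs hind
    have h1 := hstep s hs
    have h2 := hbern s
    have hpow0 : (0 : ℝ) < ν ^ s := pow_pos hν0 s
    have h3 : ν ^ s * L ≤ ν ^ s * (A * (ν ^ 2 - q)) := mul_le_mul_of_nonneg_left hAL (le_of_lt hpow0)
    have h4 : q * a s ≤ q * (A * ν ^ s) := mul_le_mul_of_nonneg_left hind (le_of_lt hq0)
    have h5 : ν ^ (s + 2) = ν ^ s * ν ^ 2 := by ring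
    calc a (s + 2) ≤ Real.logb 2 C + s * Real.logb 2 q + q * a s := h1
    _ ≤ ν ^ s * (A * (ν ^ 2 - q)) + q * (A * ν ^ s) := by linarith
    _ = A * ν ^ (s + 2) := by rw [h5]; ring
  have hpair : ∀ t : ℕ, a (t + 1) ≤ A * ν ^ (t + 1) ∧ a (t + 2) ≤ A * ν ^ (t + 2) := by
    intro t
    induction t with
    | zero =>
      have e1 : (1 : ℝ) ≤ ν ^ 1 := by simpa using le_of_lt hν1
      have e2 : (1 : ℝ) ≤ ν ^ 2 := one_le_pow₀ (le_of_lt hν1)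
      have k1 : A * 1 ≤ A * ν ^ 1 := mul_le_mul_of_nonneg_left e1 hA0
      have k2 : A * 1 ≤ A * ν ^ 2 := mul_le_mul_of_nonneg_left e2 hA0
      rw [mul_one] at k1 k2
      constructor
      · simpa using le_trans hAa1 k1
      · simpa using le_trans hAa2 k2
    | succ t ih =>
      refine ⟨ih.2, ?_⟩
      have := hstep2 (t + 1) (Nat.le_add_left 1 t) ih.1
      simpa [add_assoc] using this
  have hclaim : ∀ s : ℕ, a s ≤ A * ν ^ s := by
    intro s
    match s with
    | 0 => simpa using hAa0
    | Nat.succ t => exact (hpair t).1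
  -- choose s₀
  have hone : 1 < μ / ν := (one_lt_div hν0).mpr hνμ
  obtain ⟨s₀, hs₀⟩ := pow_unbounded_of_one_lt A hone
  refine ⟨s₀, fun s hs => ?_⟩
  have hmono : (μ / ν) ^ s₀ ≤ (μ / ν) ^ s := pow_le_pow_right₀ (le_of_lt hone) hs
  have hνs : (0 : ℝ) < ν ^ s := pow_pos hν0 s
  have h6 : A * ν ^ s ≤ μ ^ s := by
    have h7 : A ≤ (μ / ν) ^ s := le_trans (le_of_lt hs₀) hmono
    calc A * ν ^ s ≤ (μ / ν) ^ s * ν ^ s := mul_le_mul_of_nonneg_right h7 (le_of_lt hνs)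
    _ = μ ^ s := by rw [div_pow, div_mul_cancel₀ _ (ne_of_gt hνs)]
  have h8 : a s ≤ μ ^ s := le_trans (hclaim s) h6
  have h9 : b s = (2 : ℝ) ^ (a s) := by
    rw [hadef]
    exact (Real.rpow_logb two_pos (by norm_num) (hb0 s)).symm
  rw [h9]
  exact Real.rpow_le_rpow_of_exponent_le one_le_two h8
end

section
/- Let p ≥ 2, C ≥ 1, μ > 0, and let (λ_s)_{s∈ℕ} satisfy λ_s ≥ 1 and λ_s ≤ C·p^(s/2)·2^((p/2)·μ^s)·λ_{s-1}^((p+1)/2) for all s ≥ 1. Then for every μ₀ > max(μ, (p+1)/2) there exists s₀ ∈ ℕ such that for all s ≥ s₀, λ_s ≤ 2^(μ₀^s). -/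
theorem lambda_recurrence (p : ℕ) (hp : 2 ≤ p) (C μ : ℝ) (hC : 1 ≤ C) (hμ : 0 < μ)
    (lam : ℕ → ℝ) (hlam : ∀ s, 1 ≤ lam s)
    (hrec : ∀ s : ℕ, 1 ≤ s →
      lam s ≤ C * (p : ℝ) ^ ((s : ℝ) / 2) * (2 : ℝ) ^ (((p : ℝ) / 2) * μ ^ s) *
        lam (s - 1) ^ (((p : ℝ) + 1) / 2)) :
    ∀ μ₀ : ℝ, max μ (((p : ℝ) + 1) / 2) < μ₀ →
      ∃ s₀ : ℕ, ∀ s : ℕ, s₀ ≤ s → lam s ≤ (2 : ℝ) ^ (μ₀ ^ s) := by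
  intro μ₀ hμ₀
  have h12 : (1:ℝ) < 2 := one_lt_two
  have hp2 : (2:ℝ) ≤ (p:ℝ) := by exact_mod_cast hp
  set ν : ℝ := max μ (((p:ℝ)+1)/2) with hνdef
  have hν32 : (3/2 : ℝ) ≤ ν := le_trans (by linarith) (le_max_right _ _)
  have hν1 : (1:ℝ) ≤ ν := by linarith
  have hν0 : (0:ℝ) < ν := by linarith
  set A : ℝ := Real.logb 2 C with hAdef
  set B : ℝ := Real.logb 2 (p:ℝ) with hBdef
  set L : ℕ → ℝ := fun s => Real.logb 2 (lam s) with hLdef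
  have hA : 0 ≤ A := Real.logb_nonneg h12 hC
  have hB : 0 ≤ B := Real.logb_nonneg h12 (by linarith)
  have hlampos : ∀ s, 0 < lam s := fun s => lt_of_lt_of_le one_pos (hlam s)
  have hL0 : ∀ s, 0 ≤ L s := fun s => Real.logb_nonneg h12 (hlam s)
  set K : ℝ := A + B + (p:ℝ)/2 + L 0 + 1 with hKdef
  have hK1 : (1:ℝ) ≤ K := by have := hL0 0; simp only [hKdef]; linarith
  have hK0 : (0:ℝ) < K := by linarith
  -- helper: s + 1 ≤ 2 * ν ^ s
  have hlin : ∀ s : ℕ, ((s:ℝ) + 1) ≤ 2 * ν ^ s := by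
    intro s
    have hb : (1:ℝ) + (s:ℝ) * (1/2) ≤ (1 + 1/2) ^ s :=
      one_add_mul_le_pow (by norm_num) s
    have hpow : ((3:ℝ)/2) ^ s ≤ ν ^ s := pow_le_pow_left₀ (by norm_num) hν32 s
    have : (1:ℝ) + 1/2 = 3/2 := by norm_num
    rw [this] at hb
    nlinarith [pow_nonneg (le_of_lt hν0) s]
  -- log form of the recurrence
  have hlog : ∀ t : ℕ, L (t+1) ≤ A + (((t:ℝ)+1)/2) * B + ((p:ℝ)/2) * μ ^ (t+1) +
      (((p:ℝ)+1)/2) * L t := by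
    intro t
    have h1 := hrec (t+1) (by omega)
    have hpp : (0:ℝ) < (p:ℝ) := by linarith
    have hr1 : (0:ℝ) < (p:ℝ) ^ (((t+1:ℕ):ℝ)/2) := Real.rpow_pos_of_pos hpp _
    have hr2 : (0:ℝ) < (2:ℝ) ^ (((p:ℝ)/2) * μ ^ (t+1)) := Real.rpow_pos_of_pos two_pos _
    have hr3 : (0:ℝ) < lam (t+1-1) ^ (((p:ℝ)+1)/2) :=
      Real.rpow_pos_of_pos (hlampos _) _
    have hCpos : (0:ℝ) < C := by linarith
    calc L (t+1) ≤ Real.logb 2 (C * (p:ℝ) ^ (((t+1:ℕ):ℝ)/2) *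
            (2:ℝ) ^ (((p:ℝ)/2) * μ ^ (t+1)) * lam (t+1-1) ^ (((p:ℝ)+1)/2)) :=
          Real.logb_le_logb_of_le h12 (hlampos _) h1
      _ = A + (((t+1:ℕ):ℝ)/2) * B + ((p:ℝ)/2) * μ ^ (t+1) + (((p:ℝ)+1)/2) * L t := by
          rw [Real.logb_mul (by positivity) (ne_of_gt hr3),
            Real.logb_mul (by positivity) (ne_of_gt hr2),
            Real.logb_mul (ne_of_gt hCpos) (ne_of_gt hr1),
            Real.logb_rpow_eq_mul_logb_of_pos hpp,
            Real.logb_rpow (by norm_num) (by norm_num),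
            Real.logb_rpow_eq_mul_logb_of_pos (hlampos _)]
          simp [hLdef, hAdef, hBdef, mul_comm]
      _ = A + (((t:ℝ)+1)/2) * B + ((p:ℝ)/2) * μ ^ (t+1) + (((p:ℝ)+1)/2) * L t := by
          push_cast; ring_nf
  -- main induction: L s ≤ K * (s+1) * ν ^ s
  have main : ∀ s : ℕ, L s ≤ K * ((s:ℝ)+1) * ν ^ s := by
    intro s
    induction s with
    | zero => simp [hKdef]; nlinarith
    | succ t ih =>
      have hνpow : (0:ℝ) ≤ ν ^ (t+1) := pow_nonneg hν0.le _
      have hνpow1 : (1:ℝ) ≤ ν ^ (t+1) := one_le_pow₀ hν1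
      have e1 : A ≤ A * ν ^ (t+1) := le_mul_of_one_le_right hA hνpow1
      have e2 : (((t:ℝ)+1)/2) * B ≤ B * ν ^ (t+1) := by
        have h1 : ((t:ℝ)+1)/2 ≤ ν ^ t := by have := hlin t; linarith
        have h2 : ν ^ t ≤ ν ^ (t+1) := pow_le_pow_right₀ hν1 (by omega)
        calc (((t:ℝ)+1)/2) * B ≤ ν ^ (t+1) * B :=
              mul_le_mul_of_nonneg_right (h1.trans h2) hB
          _ = B * ν ^ (t+1) := mul_comm _ _
      have e3 : ((p:ℝ)/2) * μ ^ (t+1) ≤ ((p:ℝ)/2) * ν ^ (t+1) := by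
        have : μ ^ (t+1) ≤ ν ^ (t+1) := pow_le_pow_left₀ hμ.le (le_max_left _ _) _
        nlinarith
      have e4 : (((p:ℝ)+1)/2) * L t ≤ K * ((t:ℝ)+1) * ν ^ (t+1) := by
        have hq : ((p:ℝ)+1)/2 ≤ ν := le_max_right _ _
        have h1 : (((p:ℝ)+1)/2) * L t ≤ ν * (K * ((t:ℝ)+1) * ν ^ t) := by
          apply mul_le_mul hq ih (hL0 t) hν0.le
        calc (((p:ℝ)+1)/2) * L t ≤ ν * (K * ((t:ℝ)+1) * ν ^ t) := h1
          _ = K * ((t:ℝ)+1) * ν ^ (t+1) := by ring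
      have := hlog t
      have hKb : A + B + (p:ℝ)/2 ≤ K := by have := hL0 0; simp only [hKdef]; linarith
      have : L (t+1) ≤ (A + B + (p:ℝ)/2) * ν ^ (t+1) + K * ((t:ℝ)+1) * ν ^ (t+1) := by
        linarith
      calc L (t+1) ≤ (A + B + (p:ℝ)/2) * ν ^ (t+1) + K * ((t:ℝ)+1) * ν ^ (t+1) := this
        _ ≤ K * ν ^ (t+1) + K * ((t:ℝ)+1) * ν ^ (t+1) := by
            nlinarith
        _ = K * (((t+1:ℕ):ℝ)+1) * ν ^ (t+1) := by push_cast; ring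
  -- eventual comparison
  have hνμ₀ : ν < μ₀ := hμ₀
  have hμ₀0 : (0:ℝ) < μ₀ := lt_of_lt_of_le hν0 hνμ₀.le
  set r : ℝ := ν / μ₀ with hrdef
  have hr0 : 0 ≤ r := div_nonneg hν0.le hμ₀0.le
  have hr1 : r < 1 := (div_lt_one hμ₀0).mpr hνμ₀
  have htend : Filter.Tendsto (fun s : ℕ => K * (((s:ℝ)+1) * r ^ s)) Filter.atTop (nhds 0) := by
    have h1 := tendsto_self_mul_const_pow_of_lt_one hr0 hr1
    have h2 := tendsto_pow_atTop_nhds_zero_of_lt_one hr0 hr1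
    have h3 : Filter.Tendsto (fun s : ℕ => ((s:ℝ)+1) * r ^ s) Filter.atTop (nhds 0) := by
      have := h1.add h2
      simpa [add_mul] using this
    simpa using h3.const_mul K
  have hev : ∀ᶠ s : ℕ in Filter.atTop, K * (((s:ℝ)+1) * r ^ s) < 1 :=
    htend.eventually (gt_mem_nhds one_pos)
  rcases Filter.eventually_atTop.mp hev with ⟨s₀, hs₀⟩
  refine ⟨s₀, fun s hs => ?_⟩
  have hsmall := hs₀ s hs
  have hcmp : K * ((s:ℝ)+1) * ν ^ s ≤ μ₀ ^ s := by
    have hνeq : ν ^ s = r ^ s * μ₀ ^ s := by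
      rw [hrdef, div_pow, div_mul_cancel₀]
      exact pow_ne_zero _ (ne_of_gt hμ₀0)
    have hμ₀pow : (0:ℝ) < μ₀ ^ s := pow_pos hμ₀0 s
    rw [hνeq]
    calc K * ((s:ℝ)+1) * (r ^ s * μ₀ ^ s) = (K * (((s:ℝ)+1) * r ^ s)) * μ₀ ^ s := by ring
      _ ≤ 1 * μ₀ ^ s := mul_le_mul_of_nonneg_right hsmall.le hμ₀pow.le
      _ = μ₀ ^ s := one_mul _
  have hLs : L s ≤ μ₀ ^ s := (main s).trans hcmp
  have := (Real.logb_le_iff_le_rpow h12 (hlampos s)).mp hLs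
  exact this
end

section
/- Let μ > 1 and s ∈ ℕ. Then the power series Σ_{n≥0} x^n / 2^(μ^(s+n)) converges for every x ∈ ℝ (infinite radius of convergence), and its sum F(x) satisfies: for every polynomial P there exists x₁ such that F(x) ≥ |P(x)| for all x ≥ x₁ (i.e., F grows faster than any polynomial at +∞). -/
/-!
The exponents grow geometrically, so the ratio of consecutive denominators
`2 ^ (μ ^ (s + n + 1)) / 2 ^ (μ ^ (s + n)) = 2 ^ ((μ - 1) μ ^ (s + n))` tends to infinity and the
ratio test gives convergence everywhere. For `x ≥ 0` every term is nonnegative, so the sum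
dominates its term of index `deg P + 1`, which in turn dominates `|P x|` for large `x`.
-/

open Filter Topology Polynomial

theorem summable_pow_div_of_tendsto_div_succ {b : ℕ → ℝ} (hb : ∀ n, 0 < b n)
    (hratio : Tendsto (fun n => b n / b (n + 1)) atTop (𝓝 0)) (x : ℝ) :
    Summable fun n => x ^ n / b n := by
  refine summable_of_ratio_norm_eventually_le (r := 1 / 2) (by norm_num) ?_
  have hsmall : ∀ᶠ n in atTop, |x| * (b n / b (n + 1)) ≤ 1 / 2 := by
    have : Tendsto (fun n => |x| * (b n / b (n + 1))) atTop (𝓝 0) := by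
      simpa using hratio.const_mul |x|
    exact this.eventually (ge_mem_nhds (by norm_num))
  filter_upwards [hsmall] with n hn
  have hterm : ‖x ^ (n + 1) / b (n + 1)‖ = |x| * (b n / b (n + 1)) * ‖x ^ n / b n‖ := by
    have hbn : b n ≠ 0 := (hb n).ne'
    simp only [Real.norm_eq_abs, abs_div, abs_pow, abs_of_pos (hb n), abs_of_pos (hb (n + 1))]
    field_simp
    ring
  rw [hterm]
  exact mul_le_mul_of_nonneg_right hn (norm_nonneg _)

theorem Polynomial.eventually_abs_eval_le_tsum_pow_div {b : ℕ → ℝ} (hb : ∀ n, 0 < b n)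
    (hsum : ∀ x, Summable fun n => x ^ n / b n) (P : ℝ[X]) :
    ∀ᶠ x in atTop, |P.eval x| ≤ ∑' n, x ^ n / b n := by
  set d := P.natDegree + 1
  have hlittle : (fun x => P.eval x) =o[atTop] fun x => x ^ d := by
    have hdeg : P.degree < (X ^ d : ℝ[X]).degree := by
      rw [degree_X_pow]
      exact degree_le_natDegree.trans_lt (by exact_mod_cast P.natDegree.lt_succ_self)
    simpa using isLittleO_atTop_of_degree_lt _ _ hdeg
  filter_upwards [hlittle.def (inv_pos.2 (hb d)), eventually_ge_atTop 0] with x hPx hx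
  calc |P.eval x| ≤ (b d)⁻¹ * ‖x ^ d‖ := hPx
    _ = x ^ d / b d := by rw [Real.norm_eq_abs, abs_of_nonneg (pow_nonneg hx d), inv_mul_eq_div]
    _ ≤ ∑' n, x ^ n / b n :=
      (hsum x).le_tsum d fun n _ => div_nonneg (pow_nonneg hx n) (hb n).le

theorem tendsto_rpow_pow_div_rpow_pow_succ {c μ : ℝ} (hc : 1 < c) (hμ : 1 < μ) (s : ℕ) :
    Tendsto (fun n : ℕ => c ^ (μ ^ (s + n)) / c ^ (μ ^ (s + (n + 1)))) atTop (𝓝 0) := by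
  have hexp : Tendsto (fun n : ℕ => μ ^ (n + s) * (1 - μ)) atTop atBot :=
    ((tendsto_pow_atTop_atTop_of_one_lt hμ).comp (tendsto_add_atTop_nat s)).atTop_mul_const_of_neg
      (by linarith)
  refine ((tendsto_rpow_atBot_of_base_gt_one c hc).comp hexp).congr fun n => ?_
  rw [Function.comp_apply, ← Real.rpow_sub (by linarith)]
  congr 1
  ring

theorem superpolynomial_weight (μ : ℝ) (hμ : 1 < μ) (s : ℕ) :
    (∀ x : ℝ, Summable (fun n : ℕ => x ^ n / (2 : ℝ) ^ (μ ^ (s + n)))) ∧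
    ∀ P : Polynomial ℝ, ∃ x₁ : ℝ, ∀ x : ℝ, x₁ ≤ x →
      |P.eval x| ≤ ∑' n : ℕ, x ^ n / (2 : ℝ) ^ (μ ^ (s + n)) := by
  have hpos : ∀ n : ℕ, 0 < (2 : ℝ) ^ (μ ^ (s + n)) := fun n => Real.rpow_pos_of_pos two_pos _
  have hsum := summable_pow_div_of_tendsto_div_succ hpos
    (tendsto_rpow_pow_div_rpow_pow_succ one_lt_two hμ s)
  exact ⟨hsum, fun P => eventually_atTop.1 (P.eventually_abs_eval_le_tsum_pow_div hpos hsum)⟩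
end
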